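/- arXiv:2306.03429 — 5 statements merged into one kernel-verified Lean document; each statement's English description precedes it below -/
import Mathlib

section
/- Let k ≥ 2 be an integer, λ > 0, and let m, r be integers with 0 ≤ m ≤ k, 0 ≤ r ≤ k and m + r ≥ k - 1. If x, y > 0 satisfy x = (1+λx)^(-m) · (1+λy)^(-(k-m)) and y = (1+λy)^(-r) · (1+λx)^(-(k-r)), then x = y. -/
theorem stmt_0 (k m r : ℕ) (hk : 2 ≤ k) (hm : m ≤ k) (hr : r ≤ k)
    (hmr : k - 1 ≤ m + r) (lam x y : ℝ) (hlam : 0 < lam) (hx : 0 < x) (hy : 0 < y)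
    (e1 : x = ((1 + lam * x) ^ m)⁻¹ * ((1 + lam * y) ^ (k - m))⁻¹)
    (e2 : y = ((1 + lam * y) ^ r)⁻¹ * ((1 + lam * x) ^ (k - r))⁻¹) :
    x = y := by
  have ha : (0:ℝ) < 1 + lam * x := by positivity
  have hb : (0:ℝ) < 1 + lam * y := by positivity
  have e1' : x * ((1 + lam * x) ^ m * (1 + lam * y) ^ (k - m)) = 1 := by
    have h := e1
    field_simp at h
    linear_combination h
  have e2' : y * ((1 + lam * y) ^ r * (1 + lam * x) ^ (k - r)) = 1 := by
    have h := e2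
    field_simp at h
    linear_combination h
  have hkm : k - m + m = k := Nat.sub_add_cancel hm
  have hkr : k - r + r = k := Nat.sub_add_cancel hr
  have key : x * (1 + lam * x) ^ (m + r) * (1 + lam * y) ^ k
      = y * (1 + lam * y) ^ (m + r) * (1 + lam * x) ^ k := by
    have h1 : x * (1 + lam * x) ^ (m + r) * (1 + lam * y) ^ k
        = (x * ((1 + lam * x) ^ m * (1 + lam * y) ^ (k - m)))
          * ((1 + lam * x) ^ r * (1 + lam * y) ^ m) := by
      conv_lhs => rw [← hkm, pow_add (1 + lam * y), pow_add (1 + lam * x)]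
      ring
    have h2 : y * (1 + lam * y) ^ (m + r) * (1 + lam * x) ^ k
        = (y * ((1 + lam * y) ^ r * (1 + lam * x) ^ (k - r)))
          * ((1 + lam * y) ^ m * (1 + lam * x) ^ r) := by
      conv_lhs => rw [← hkr, pow_add (1 + lam * x), add_comm m r, pow_add (1 + lam * y)]
      ring
    rw [h1, h2, e1', e2']; ring
  rcases Nat.lt_or_ge (m + r) k with hlt | hge
  · -- m + r = k - 1, so k = m + r + 1
    have hkeq : k = m + r + 1 := by omega
    subst hkeq
    rw [pow_succ, pow_succ] at key
    have hc : (1 + lam * x) ^ (m + r) * (1 + lam * y) ^ (m + r) * (x * (1 + lam * y))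
        = (1 + lam * x) ^ (m + r) * (1 + lam * y) ^ (m + r) * (y * (1 + lam * x)) := by
      linear_combination key
    have hne : (1 + lam * x) ^ (m + r) * (1 + lam * y) ^ (m + r) ≠ 0 := by positivity
    have h := mul_left_cancel₀ hne hc
    nlinarith [h]
  · obtain ⟨s, hs⟩ := Nat.exists_eq_add_of_le hge
    rw [hs] at key
    rw [pow_add, pow_add] at key
    have hc : (1 + lam * x) ^ k * (1 + lam * y) ^ k * (x * (1 + lam * x) ^ s)
        = (1 + lam * x) ^ k * (1 + lam * y) ^ k * (y * (1 + lam * y) ^ s) := by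
      linear_combination key
    have hne : (1 + lam * x) ^ k * (1 + lam * y) ^ k ≠ 0 := by positivity
    have h := mul_left_cancel₀ hne hc
    rcases lt_trichotomy x y with hxy | hxy | hxy
    · exfalso
      have h1 : x * (1 + lam * x) ^ s < y * (1 + lam * y) ^ s := by
        have : (1 + lam * x) ^ s ≤ (1 + lam * y) ^ s :=
          pow_le_pow_left₀ (le_of_lt ha) (by nlinarith) s
        calc x * (1 + lam * x) ^ s < y * (1 + lam * x) ^ s := by
              exact mul_lt_mul_of_pos_right hxy (by positivity)
          _ ≤ y * (1 + lam * y) ^ s := by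
              exact mul_le_mul_of_nonneg_left this (le_of_lt hy)
      linarith
    · exact hxy
    · exfalso
      have h1 : y * (1 + lam * y) ^ s < x * (1 + lam * x) ^ s := by
        have : (1 + lam * y) ^ s ≤ (1 + lam * x) ^ s :=
          pow_le_pow_left₀ (le_of_lt hb) (by nlinarith) s
        calc y * (1 + lam * y) ^ s < x * (1 + lam * y) ^ s := by
              exact mul_lt_mul_of_pos_right hxy (by positivity)
          _ ≤ x * (1 + lam * x) ^ s := by
              exact mul_le_mul_of_nonneg_left this (le_of_lt hx)
      linarith
end

section
/- Let λ > 0 and x, y > 0 with x ≠ y and λ²xy = 1. The pair (x,y) satisfies x = (1+λx)^(-1)(1+λy)^(-3) and y = (1+λy)^(-1)(1+λx)^(-3) if and only if (1+λx)⁴ = λ³x² and (1+λy)⁴ = λ³y². -/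
lemma aux_8 (lam x y : ℝ) (hlam : 0 < lam) (hx : 0 < x) (hy : 0 < y)
    (hxy : lam ^ 2 * x * y = 1) :
    x = ((1 + lam * x))⁻¹ * ((1 + lam * y) ^ 3)⁻¹ ↔
      (1 + lam * x) ^ 4 = lam ^ 3 * x ^ 2 := by
  have ha : (0:ℝ) < 1 + lam * x := by positivity
  have hb : (0:ℝ) < 1 + lam * y := by positivity
  have h1 : lam * x * (1 + lam * y) = 1 + lam * x := by linear_combination hxy
  have hb' : (1 + lam * y) = (1 + lam * x) * (lam * y) := by
    linear_combination lam * y * h1 - (1 + lam * y) * hxy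
  constructor
  · intro e1
    have e1' : ((1 + lam * x) * (1 + lam * y) ^ 3) * x = 1 := by
      calc ((1 + lam * x) * (1 + lam * y) ^ 3) * x
          = ((1 + lam * x) * (1 + lam * y) ^ 3) *
            ((1 + lam * x)⁻¹ * ((1 + lam * y) ^ 3)⁻¹) := by rw [← e1]
        _ = 1 := by field_simp
    have step : (1 + lam * x) ^ 4 * (lam ^ 3 * y ^ 3 * x)
        = lam ^ 3 * x ^ 2 * (lam ^ 3 * y ^ 3 * x) := by
      calc (1 + lam * x) ^ 4 * (lam ^ 3 * y ^ 3 * x)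
          = ((1 + lam * x) * ((1 + lam * x) * (lam * y)) ^ 3) * x := by ring
        _ = ((1 + lam * x) * (1 + lam * y) ^ 3) * x := by rw [← hb']
        _ = 1 := e1'
        _ = lam ^ 3 * x ^ 2 * (lam ^ 3 * y ^ 3 * x) := by
            rw [show lam ^ 3 * x ^ 2 * (lam ^ 3 * y ^ 3 * x) = (lam ^ 2 * x * y) ^ 3 by ring,
              hxy, one_pow]
    have hnz : (lam ^ 3 * y ^ 3 * x) ≠ 0 := by positivity
    exact mul_right_cancel₀ hnz step
  · intro g1
    have key : ((1 + lam * x) * (1 + lam * y) ^ 3) * x = 1 := by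
      calc ((1 + lam * x) * (1 + lam * y) ^ 3) * x
          = ((1 + lam * x) * ((1 + lam * x) * (lam * y)) ^ 3) * x := by rw [← hb']
        _ = (1 + lam * x) ^ 4 * (lam ^ 3 * y ^ 3 * x) := by ring
        _ = lam ^ 3 * x ^ 2 * (lam ^ 3 * y ^ 3 * x) := by rw [g1]
        _ = (lam ^ 2 * x * y) ^ 3 := by ring
        _ = 1 := by rw [hxy, one_pow]
    rw [← mul_inv]
    exact eq_inv_of_mul_eq_one_left (by linear_combination key)

theorem stmt_8 (lam x y : ℝ) (hlam : 0 < lam) (hx : 0 < x) (hy : 0 < y)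
    (hne : x ≠ y) (hxy : lam ^ 2 * x * y = 1) :
    (x = ((1 + lam * x))⁻¹ * ((1 + lam * y) ^ 3)⁻¹ ∧
     y = ((1 + lam * y))⁻¹ * ((1 + lam * x) ^ 3)⁻¹) ↔
    ((1 + lam * x) ^ 4 = lam ^ 3 * x ^ 2 ∧ (1 + lam * y) ^ 4 = lam ^ 3 * y ^ 2) := by
  exact and_congr (aux_8 lam x y hlam hx hy hxy)
    (aux_8 lam y x hlam hy hx (by linear_combination hxy))
end

section
/- For λ > 16, the two numbers x = (√λ − 2 + √(λ − 4√λ))/(2λ) and y = (√λ − 2 − √(λ − 4√λ))/(2λ) satisfy λ²xy = 1 and x ≠ y, and (x,y) solves the system x = (1+λx)^(-1)(1+λy)^(-3), y = (1+λy)^(-1)(1+λx)^(-3). -/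
/-!
Put `s = √λ`, `t = √(λ - 4s)`, `a = (s + t)/2 = 1 + λx` and `b = (s - t)/2 = 1 + λy`.
Then `a + b = ab = s`, so `λ = (ab)²`, and the identity `a + b = ab` alone gives everything:
`(a - 1)(b - 1) = 1` is `λ²xy = 1`, and `(a - 1)b = a` turns `λx = a - 1` into `x = a⁻¹b⁻³`.
-/

theorem sub_one_mul_sub_one_eq_one_of_add_eq_mul {R : Type*} [CommRing R] {a b : R}
    (hab : a + b = a * b) : (a - 1) * (b - 1) = 1 := by
  linear_combination -hab

theorem sub_one_div_mul_sq_of_add_eq_mul {K : Type*} [Field K] {a b : K}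
    (ha : a ≠ 0) (hb : b ≠ 0) (hab : a + b = a * b) :
    (a - 1) / (a * b) ^ 2 = a⁻¹ * (b ^ 3)⁻¹ := by
  field_simp
  linear_combination -hab

theorem stmt_10 (lam : ℝ) (hlam : 16 < lam) :
    let x : ℝ := (Real.sqrt lam - 2 + Real.sqrt (lam - 4 * Real.sqrt lam)) / (2 * lam)
    let y : ℝ := (Real.sqrt lam - 2 - Real.sqrt (lam - 4 * Real.sqrt lam)) / (2 * lam)
    lam ^ 2 * x * y = 1 ∧ x ≠ y ∧
    x = ((1 + lam * x))⁻¹ * ((1 + lam * y) ^ 3)⁻¹ ∧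
    y = ((1 + lam * y))⁻¹ * ((1 + lam * x) ^ 3)⁻¹ := by
  intro x y
  set s := Real.sqrt lam
  set t := Real.sqrt (lam - 4 * s)
  have hs : s ^ 2 = lam := Real.sq_sqrt (by linarith)
  have hs4 : 4 < s := by nlinarith [Real.sqrt_nonneg lam]
  have ht : t ^ 2 = lam - 4 * s := Real.sq_sqrt (by nlinarith)
  have ht0 : 0 < t := Real.sqrt_pos.mpr (by nlinarith)
  have hts : t < s := by nlinarith
  set a := (s + t) / 2
  set b := (s - t) / 2
  have hab : a + b = a * b := by linear_combination (-1 / 4 : ℝ) * (hs - ht)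
  have hlam_ab : lam = (a * b) ^ 2 := by rw [← hab]; linear_combination -hs
  have hlam0 : lam ≠ 0 := by positivity
  have hx : x = (a - 1) / lam := by simp only [x, a]; ring
  have hy : y = (b - 1) / lam := by simp only [y, b]; ring
  have hax : 1 + lam * x = a := by rw [hx]; field_simp; ring
  have hby : 1 + lam * y = b := by rw [hy]; field_simp; ring
  have ha0 : a ≠ 0 := by positivity
  have hb0 : b ≠ 0 := by simp only [b]; linarith
  refine ⟨?_, ?_, ?_, ?_⟩
  · calc lam ^ 2 * x * y = (1 + lam * x - 1) * (1 + lam * y - 1) := by ring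
      _ = 1 := by rw [hax, hby]; exact sub_one_mul_sub_one_eq_one_of_add_eq_mul hab
  · intro hxy
    have hab_eq : a = b := by rw [← hax, ← hby, hxy]
    simp only [a, b] at hab_eq
    linarith
  · rw [hax, hby, hx, hlam_ab]
    exact sub_one_div_mul_sq_of_add_eq_mul ha0 hb0 hab
  · rw [hax, hby, hy, hlam_ab, mul_comm a b]
    exact sub_one_div_mul_sq_of_add_eq_mul hb0 ha0 (by linarith)
end

section
/- Let f : [0,1] → [0,1] be continuous with a fixed point ξ ∈ (0,1). Assume f is differentiable at ξ and f′(ξ) < −1. Then there exist points x₀, x₁ with 0 ≤ x₀ < ξ < x₁ ≤ 1 such that f(x₀) = x₁ and f(x₁) = x₀. -/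
open Topology Filter


theorem stmt_11 (f : ℝ → ℝ) (hmaps : Set.MapsTo f (Set.Icc 0 1) (Set.Icc 0 1))
    (hcont : ContinuousOn f (Set.Icc 0 1)) (ξ : ℝ) (hξ : ξ ∈ Set.Ioo (0 : ℝ) 1)
    (hfix : f ξ = ξ) (hdiff : DifferentiableAt ℝ f ξ) (hder : deriv f ξ < -1) :
    ∃ x₀ x₁ : ℝ, 0 ≤ x₀ ∧ x₀ < ξ ∧ ξ < x₁ ∧ x₁ ≤ 1 ∧ f x₀ = x₁ ∧ f x₁ = x₀ := by
  set d := deriv f ξ with hd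
  have hd2 : 1 < d * d := by nlinarith
  have hfd : HasDerivAt f d ξ := hdiff.hasDerivAt
  have hfd' : HasDerivAt f d (f ξ) := by rw [hfix]; exact hfd
  have hgd : HasDerivAt (f ∘ f) (d * d) ξ := hfd'.comp ξ hfd
  have hslopef : Filter.Tendsto (slope f ξ) (𝓝[≠] ξ) (𝓝 d) :=
    hasDerivAt_iff_tendsto_slope.mp hfd
  have hslopeg : Filter.Tendsto (slope (f ∘ f) ξ) (𝓝[≠] ξ) (𝓝 (d * d)) :=
    hasDerivAt_iff_tendsto_slope.mp hgd
  have hle : 𝓝[<] ξ ≤ 𝓝[≠] ξ := nhdsWithin_mono _ (fun x hx => ne_of_lt hx)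
  have h1 : ∀ᶠ x in 𝓝[<] ξ, slope f ξ x < 0 :=
    (hslopef.mono_left hle).eventually_lt_const (by linarith)
  have h2 : ∀ᶠ x in 𝓝[<] ξ, 1 < slope (f ∘ f) ξ x :=
    (hslopeg.mono_left hle).eventually_const_lt hd2
  have h3 : ∀ᶠ x in 𝓝[<] ξ, x ∈ Set.Ioo 0 ξ :=
    eventually_mem_nhdsWithin.mono (fun x hx => hx) |>.and
      ((eventually_mem_nhdsWithin (s := Set.Iio ξ)).mono (fun x hx => hx)) |>.mono
      (fun x hx => hx.2) |>.and (Filter.eventually_iff_exists_mem.mpr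
        ⟨Set.Ioo 0 ξ, Ioo_mem_nhdsLT_of_mem ⟨hξ.1, le_refl ξ⟩, fun x hx => hx⟩) |>.mono
      (fun x hx => hx.2)
  obtain ⟨b, ⟨hs1, hs2⟩, hb0, hbξ⟩ := ((h1.and h2).and h3).exists
  rw [slope_def_field] at hs1 hs2
  have hbsub : b - ξ < 0 := by linarith
  have hfb : ξ < f b := by
    rw [div_lt_iff_of_neg hbsub] at hs1
    rw [hfix] at hs1; nlinarith
  have hgb : f (f b) < b := by
    rw [lt_div_iff_of_neg hbsub] at hs2
    simp only [Function.comp_apply, hfix] at hs2; nlinarith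
  have hbmem : b ∈ Set.Icc (0:ℝ) 1 := ⟨hb0.le, by linarith [hξ.2]⟩
  have hsub01 : Set.Icc 0 b ⊆ Set.Icc (0:ℝ) 1 := Set.Icc_subset_Icc le_rfl hbmem.2
  -- find c
  obtain ⟨c, hc0, hcb, hcge, habove, hedge⟩ :
      ∃ c, 0 ≤ c ∧ c ≤ b ∧ c ≤ f (f c) ∧ (∀ x, c < x → x ≤ b → ξ < f x) ∧
        (f (f c) = c → ξ < f c) := by
    by_cases hS : ∃ x ∈ Set.Icc 0 b, f x ≤ ξ
    · set S := {x ∈ Set.Icc 0 b | f x ≤ ξ} with hSdef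
      have hScomp : IsCompact S := by
        have : IsClosed S := by
          have h1 : IsClosed (Set.Icc (0:ℝ) b) := isClosed_Icc
          have h2 : ContinuousOn f (Set.Icc 0 b) := hcont.mono hsub01
          exact h2.preimage_isClosed_of_isClosed h1 isClosed_Iic
        exact Metric.isCompact_of_isClosed_isBounded this (Bornology.IsBounded.subset
          (Metric.isBounded_Icc 0 b) (fun x hx => hx.1))
      obtain ⟨x, hx⟩ := hS
      have hSne : S.Nonempty := ⟨x, hx⟩
      set c := sSup S with hcdef
      have hcS : c ∈ S := hScomp.sSup_mem hSne
      have hub : ∀ y ∈ S, y ≤ c := fun y hy => le_csSup hScomp.bddAbove hy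
      have hcb : c ≤ b := hcS.1.2
      have hcltb : c < b := lt_of_le_of_ne hcb (by intro h; rw [h] at hcS; exact absurd hcS.2 (not_le.2 hfb))
      have habove : ∀ y, c < y → y ≤ b → ξ < f y := by
        intro y hy1 hy2
        by_contra hcon
        exact absurd (hub y ⟨⟨by linarith [hcS.1.1], hy2⟩, le_of_not_gt hcon⟩) (not_le.2 hy1)
      have hfc : f c = ξ := by
        rcases lt_or_eq_of_le hcS.2 with hlt | heq
        · exfalso
          have hcw : ContinuousWithinAt f (Set.Icc 0 1) c := hcont c (hsub01 hcS.1)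
          have hev : ∀ᶠ y in 𝓝[Set.Icc (0:ℝ) 1] c, f y < ξ := hcw.eventually (Iio_mem_nhds hlt)
          have hmono : 𝓝[Set.Ioc c b] c ≤ 𝓝[Set.Icc (0:ℝ) 1] c :=
            nhdsWithin_mono _ (fun y hy => hsub01 ⟨le_trans hcS.1.1 hy.1.le, hy.2⟩)
          have hne : (𝓝[Set.Ioc c b] c).NeBot := by
            rw [← mem_closure_iff_nhdsWithin_neBot, closure_Ioc hcltb.ne]
            exact ⟨le_rfl, hcltb.le⟩
          obtain ⟨y, hy1, hy2⟩ :=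
            ((hev.filter_mono hmono).and eventually_mem_nhdsWithin).exists
          exact absurd hy1 (not_lt.2 (habove y hy2.1 hy2.2).le)
        · exact heq
      refine ⟨c, hcS.1.1, hcb, ?_, habove, fun h => ?_⟩
      · rw [hfc, hfix]; linarith
      · exfalso; rw [hfc, hfix] at h; linarith
    · push_neg at hS
      have h0 : f (f 0) ∈ Set.Icc (0:ℝ) 1 := hmaps (hmaps (Set.left_mem_Icc.2 (by linarith [hξ.1, hξ.2])))
      exact ⟨0, le_rfl, hb0.le, h0.1, fun x hx1 hx2 => hS x ⟨hx1.le, hx2⟩,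
        fun _ => hS 0 ⟨le_rfl, hb0.le⟩⟩
  -- IVT for h(x) = f (f x) - x on [c, b]
  have hgcont : ContinuousOn (fun x => f (f x) - x) (Set.Icc c b) := by
    have : ContinuousOn (fun x => f (f x)) (Set.Icc 0 1) := hcont.comp hcont hmaps
    exact (this.mono (Set.Icc_subset_Icc hc0 hbmem.2)).sub continuousOn_id
  have hivt := intermediate_value_Icc' hcb hgcont
  have h0mem : (0:ℝ) ∈ Set.Icc (f (f b) - b) (f (f c) - c) := ⟨by linarith, by linarith⟩
  obtain ⟨x₀, hx₀mem, hx₀⟩ := hivt h0mem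
  have hfix2 : f (f x₀) = x₀ := by linarith [sub_eq_zero.mp hx₀]
  have hx01 : x₀ ∈ Set.Icc (0:ℝ) 1 := ⟨le_trans hc0 hx₀mem.1, le_trans hx₀mem.2 hbmem.2⟩
  have hfx0 : ξ < f x₀ := by
    rcases lt_or_eq_of_le hx₀mem.1 with hlt | heq
    · exact habove x₀ hlt hx₀mem.2
    · rw [← heq]; exact hedge (heq ▸ hfix2)
  exact ⟨x₀, f x₀, hx01.1, lt_of_le_of_lt hx₀mem.2 hbξ, hfx0, (hmaps hx01).2, rfl, hfix2⟩
end

section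
/- Let k ≥ 2, m ≥ 0 with 2m ≤ k − 2, and λ > ((k−2m)/(k−2m−1))^k / (k−2m−1). Then the system x = (1+λx)^(-m)(1+λy)^(-(k-m)), y = (1+λy)^(-m)(1+λx)^(-(k-m)) has at least three positive solutions: (x̃, x̃), (x, y), and (y, x) with x ≠ y. -/
/-!
Substituting `a = 1 + λx`, `b = 1 + λy` turns the system into
`(a - 1) aᵐ bᵏ⁻ᵐ = λ = (b - 1) bᵐ aᵏ⁻ᵐ`. The diagonal `a = b` gives the symmetric solution by the
intermediate value theorem applied to `(a - 1) aᵏ`. Off the diagonal, with `n = k - 2m` and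
`b = r a`, the equality of the two left-hand sides reduces to `(a - 1) rⁿ = r a - 1`, which has the
explicit solution `a(r) = 1 + 1 / (r + r² + ⋯ + rⁿ⁻¹)`. Along this curve the common value
`H(r) = (a - 1) aᵐ (r a)ᵏ⁻ᵐ` is continuous, equals the critical value at `r = 1` and grows at
least linearly, so it takes every value `λ` above the critical one at some `r > 1`.
-/

open Finset Set

lemma sub_one_div_eq_inv_pow_mul_inv_pow {p q : ℕ} {lam a b : ℝ} (hlam : lam ≠ 0)
    (h : (a - 1) * a ^ p * b ^ q = lam) :
    (a - 1) / lam =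
      ((1 + lam * ((a - 1) / lam)) ^ p)⁻¹ * ((1 + lam * ((b - 1) / lam)) ^ q)⁻¹ := by
  rw [mul_div_cancel₀ _ hlam, mul_div_cancel₀ _ hlam, add_sub_cancel, add_sub_cancel, ← mul_inv]
  refine eq_inv_of_mul_eq_one_left ?_
  rw [div_mul_eq_mul_div, ← mul_assoc, h, div_self hlam]

lemma exists_one_lt_sub_one_mul_pow_eq (k : ℕ) {lam : ℝ} (hlam : 0 < lam) :
    ∃ a, 1 < a ∧ (a - 1) * a ^ k = lam := by
  have hcont : ContinuousOn (fun a : ℝ => (a - 1) * a ^ k) (Icc 1 (1 + lam)) := by fun_prop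
  have hmem : lam ∈ Icc ((1 - 1) * 1 ^ k) ((1 + lam - 1) * (1 + lam) ^ k) := by
    refine ⟨by simpa using hlam.le, ?_⟩
    simpa using le_mul_of_one_le_right hlam.le (one_le_pow₀ (by linarith))
  obtain ⟨a, ha, hfa⟩ := intermediate_value_Icc (by linarith) hcont hmem
  refine ⟨a, lt_of_le_of_ne ha.1 ?_, hfa⟩
  rintro rfl
  simp [hlam.ne] at hfa

/-- For `b = r * a`, the point `(a, b)` with `a = curveA j r` is the off-diagonal solution of
`(a - 1) * b ^ (j + 1) = (b - 1) * a ^ (j + 1)`. -/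
noncomputable def curveA (j : ℕ) (r : ℝ) : ℝ := 1 + (r * ∑ i ∈ range j, r ^ i)⁻¹

noncomputable def curveH (p q j : ℕ) (r : ℝ) : ℝ :=
  (curveA j r - 1) * curveA j r ^ p * (r * curveA j r) ^ q

section Curve

variable {p q j : ℕ} {r : ℝ}

lemma mul_geom_sum_pos (hj : 1 ≤ j) (hr : 0 < r) : 0 < r * ∑ i ∈ range j, r ^ i :=
  mul_pos hr (geom_sum_pos hr.le (by omega))

lemma one_lt_curveA (hj : 1 ≤ j) (hr : 0 < r) : 1 < curveA j r :=
  lt_add_of_pos_right 1 (inv_pos.mpr (mul_geom_sum_pos hj hr))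

lemma mul_curveA_sub_one (hj : 1 ≤ j) (hr : 0 < r) :
    r * curveA j r - 1 = r ^ (j + 1) * (curveA j r - 1) := by
  have hs : ∑ i ∈ range j, r ^ i ≠ 0 := (geom_sum_pos hr.le (by omega)).ne'
  have hgeom := geom_sum_mul r j
  unfold curveA
  field_simp
  linear_combination r * hgeom

lemma curveA_one (j : ℕ) : curveA j 1 = 1 + (j : ℝ)⁻¹ := by
  simp [curveA]

lemma curveH_one (hj : 1 ≤ j) :
    curveH p q j 1 = (((j : ℝ) + 1) / j) ^ (p + q) / j := by
  have hj0 : (j : ℝ) ≠ 0 := by positivity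
  rw [curveH, curveA_one, one_mul, mul_assoc, ← pow_add, add_sub_cancel_left,
    show 1 + (j : ℝ)⁻¹ = (j + 1) / j by field_simp]
  ring

lemma curveH_pos (hj : 1 ≤ j) (hr : 0 < r) : 0 < curveH p q j r := by
  have hA := one_lt_curveA hj hr
  unfold curveH
  exact mul_pos (mul_pos (sub_pos.2 hA) (pow_pos (by linarith) p))
    (pow_pos (mul_pos hr (by linarith)) q)

lemma continuousOn_curveA (hj : 1 ≤ j) : ContinuousOn (curveA j) (Ioi 0) := by
  unfold curveA
  exact continuousOn_const.add ((by fun_prop : Continuous _).continuousOn.inv₀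
    fun r hr => (mul_geom_sum_pos hj hr).ne')

lemma continuousOn_curveH (hj : 1 ≤ j) : ContinuousOn (curveH p q j) (Ioi 0) := by
  have hA := continuousOn_curveA hj
  unfold curveH
  exact ((hA.sub continuousOn_const).mul (hA.pow p)).mul ((continuousOn_id.mul hA).pow q)

lemma div_le_curveH (hj : 1 ≤ j) (hq : j < q) (hr : 1 ≤ r) : r / j ≤ curveH p q j r := by
  have hr0 : 0 < r := by linarith
  have hs := mul_geom_sum_pos hj hr0
  have hA := one_lt_curveA hj hr0
  have hsum : r * ∑ i ∈ range j, r ^ i ≤ j * r ^ j := by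
    calc r * ∑ i ∈ range j, r ^ i ≤ r * ∑ _i ∈ range j, r ^ (j - 1) := by
          gcongr with i hi
          have := mem_range.mp hi
          omega
      _ = j * r ^ j := by
          rw [sum_const, card_range, nsmul_eq_mul, mul_left_comm, ← pow_succ',
            Nat.sub_add_cancel hj]
  calc r / j = r ^ (j + 1) / (j * r ^ j) := by field_simp; ring
    _ ≤ r ^ q / (r * ∑ i ∈ range j, r ^ i) := by
          gcongr
          exact hq
    _ = (curveA j r - 1) * 1 * r ^ q := by rw [curveA]; ring
    _ ≤ curveH p q j r := by
          unfold curveH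
          gcongr
          · exact one_le_pow₀ hA.le
          · exact le_mul_of_one_le_right hr0.le hA.le

lemma exists_one_lt_curveH_eq (hj : 1 ≤ j) (hq : j < q) {lam : ℝ}
    (hlam : curveH p q j 1 < lam) : ∃ r, 1 < r ∧ curveH p q j r = lam := by
  set R := j * (lam + 1)
  have hj1 : (1 : ℝ) ≤ j := by exact_mod_cast hj
  have hlam0 : 0 < lam := (curveH_pos hj one_pos).trans hlam
  have hR : 1 ≤ R := by nlinarith
  have hmem : lam ∈ Icc (curveH p q j 1) (curveH p q j R) := by
    refine ⟨hlam.le, le_trans ?_ (div_le_curveH hj hq hR)⟩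
    rw [mul_div_cancel_left₀ _ (by positivity)]
    linarith
  obtain ⟨r, hr, hHr⟩ := intermediate_value_Icc hR
    ((continuousOn_curveH hj).mono fun x hx => zero_lt_one.trans_le hx.1) hmem
  refine ⟨r, lt_of_le_of_ne hr.1 ?_, hHr⟩
  rintro rfl
  exact hlam.ne hHr

lemma curveH_swap (hj : 1 ≤ j) (hr : 0 < r) :
    (r * curveA j r - 1) * (r * curveA j r) ^ p * curveA j r ^ (p + j + 1) =
      curveH p (p + j + 1) j r := by
  rw [curveH, mul_curveA_sub_one hj hr]
  ring

end Curve

theorem stmt_14_general (k m : ℕ) (hm : 2 * m + 2 ≤ k) (lam : ℝ)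
    (hlam : (((k : ℝ) - 2 * m) / ((k : ℝ) - 2 * m - 1)) ^ k / ((k : ℝ) - 2 * m - 1) < lam) :
    ∃ xt x y : ℝ, 0 < xt ∧ 0 < x ∧ 0 < y ∧ x ≠ y ∧
      (xt = ((1 + lam * xt) ^ m)⁻¹ * ((1 + lam * xt) ^ (k - m))⁻¹) ∧
      (x = ((1 + lam * x) ^ m)⁻¹ * ((1 + lam * y) ^ (k - m))⁻¹ ∧
       y = ((1 + lam * y) ^ m)⁻¹ * ((1 + lam * x) ^ (k - m))⁻¹) := by
  obtain ⟨j, hj, rfl⟩ : ∃ j, 1 ≤ j ∧ k = 2 * m + j + 1 := ⟨k - 2 * m - 1, by omega, by omega⟩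
  have hkm : 2 * m + j + 1 - m = m + j + 1 := by omega
  have hcrit : curveH m (m + j + 1) j 1 < lam := by
    rw [curveH_one hj, show m + (m + j + 1) = 2 * m + j + 1 by ring]
    convert hlam using 2 <;> push_cast <;> ring
  have hlam0 : 0 < lam := (curveH_pos hj one_pos).trans hcrit
  obtain ⟨c, hc, hcH⟩ := exists_one_lt_sub_one_mul_pow_eq (2 * m + j + 1) hlam0
  obtain ⟨r, hr, hrH⟩ := exists_one_lt_curveH_eq hj (by omega) hcrit
  set a := curveA j r
  have ha := one_lt_curveA hj (by linarith : 0 < r)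
  have hab : a < r * a := lt_mul_left (by linarith) hr
  refine ⟨(c - 1) / lam, (a - 1) / lam, (r * a - 1) / lam, by bound, by bound, by bound,
    fun h => hab.ne (by simpa [hlam0.ne'] using h), ?_, ?_, ?_⟩ <;> rw [hkm] <;>
    refine sub_one_div_eq_inv_pow_mul_inv_pow hlam0.ne' ?_
  · rwa [mul_assoc, ← pow_add, show m + (m + j + 1) = 2 * m + j + 1 by ring]
  · exact hrH
  · rw [curveH_swap hj (by linarith), hrH]

theorem stmt_14 (k m : ℕ) (hk : 2 ≤ k) (hm : 2 * m + 2 ≤ k) (lam : ℝ)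
    (hlam : (((k : ℝ) - 2 * m) / ((k : ℝ) - 2 * m - 1)) ^ k / ((k : ℝ) - 2 * m - 1) < lam) :
    ∃ xt x y : ℝ, 0 < xt ∧ 0 < x ∧ 0 < y ∧ x ≠ y ∧
      (xt = ((1 + lam * xt) ^ m)⁻¹ * ((1 + lam * xt) ^ (k - m))⁻¹) ∧
      (x = ((1 + lam * x) ^ m)⁻¹ * ((1 + lam * y) ^ (k - m))⁻¹ ∧
       y = ((1 + lam * y) ^ m)⁻¹ * ((1 + lam * x) ^ (k - m))⁻¹) :=
  stmt_14_general k m hm lam hlam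
end
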